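/- arXiv:2509.25753 — 2 statements merged into one kernel-verified Lean document; each statement's English description precedes it below -/
import Mathlib

section
/- For every multiindex ν, the following convolution-type bound holds: Σ_{0≠m<ν} binom(ν,m)·[1/2]_{|m|}·[1/2]_{|ν−m|} ≤ 2·[1/2]_{|ν|}, where the sum ranges over all multiindices m with 0 ≠ m and m < ν (in particular, the sum is empty and equals 0 when |ν| ≤ 1). -/
/-- The absolute value of the falling factorial of `1/2`:
`[1/2]_n = ∏_{i=0}^{n-1} |1/2 - i|`, with `[1/2]_0 = 1`. -/
noncomputable def fallHalf (n : ℕ) : ℝ := ∏ i ∈ Finset.range n, |1 / 2 - (i : ℝ)|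

/-- The order `|ν| = Σ_j ν_j` of a multiindex `ν : ℕ →₀ ℕ`. -/
def morder (ν : ℕ →₀ ℕ) : ℕ := ν.sum fun _ k => k

/-- The multiindex binomial coefficient `binom(ν, m) = ∏_j binom(ν_j, m_j)`. -/
def mbinom (ν m : ℕ →₀ ℕ) : ℕ := ∏ j ∈ ν.support, Nat.choose (ν j) (m j)

/-!
Grouping the multiindices `m` by their order `k = |m|`, the multivariate Vandermonde identity
`Σ_{|m| = k} binom(ν, m) = binom(|ν|, k)` turns the sum into the one-variable sum
`Σ_{0<k<n} binom(n, k) [1/2]_k [1/2]_{n-k}` with `n = |ν|`, which is empty for `n ≤ 1`.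
For `n ≥ 2` it equals `2 [1/2]_n`: by Chu–Vandermonde,
`Σ_{k ≤ n} binom(n, k) (1/2)_k (1/2)_{n-k} = (1/2 + 1/2)_n = 0` for the signed falling factorials,
and `(1/2)_k = (-1)^(k-1) [1/2]_k` for `k ≥ 1`, so all interior terms carry the sign `(-1)^n`
and the two boundary terms the opposite one.
-/

open Finset Polynomial

theorem Finset.sum_finsuppAntidiag_prod_choose {ι : Type*} [DecidableEq ι] (s : Finset ι)
    (n : ι → ℕ) (k : ℕ) :
    ∑ f ∈ s.finsuppAntidiag k, ∏ i ∈ s, (n i).choose (f i) = (∑ i ∈ s, n i).choose k := by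
  have coeff_eq_choose (N j : ℕ) :
      PowerSeries.coeff j (((1 + X) ^ N : ℕ[X]) : PowerSeries ℕ) = N.choose j := by
    rw [Polynomial.coeff_coe, Polynomial.coeff_one_add_X_pow, Nat.cast_id]
  rw [← coeff_eq_choose, ← prod_pow_eq_pow_sum, ← Polynomial.coeToPowerSeries.ringHom_apply,
    map_prod, PowerSeries.coeff_prod]
  simp only [Polynomial.coeToPowerSeries.ringHom_apply, coeff_eq_choose]

lemma descPochhammer_int_smeval_eq_prod_range {R : Type*} [CommRing R] (n : ℕ) (r : R) :
    (descPochhammer ℤ n).smeval r = ∏ j ∈ range n, (r - j) := by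
  rw [← aeval_eq_smeval, aeval_def, eval₂_eq_eval_map, descPochhammer_map,
    descPochhammer_eval_eq_prod_range]

lemma fallHalf_succ (n : ℕ) : fallHalf (n + 1) = fallHalf n * |1 / 2 - (n : ℝ)| :=
  prod_range_succ _ _

lemma neg_one_pow_mul_prod_range_half_sub {n : ℕ} (hn : n ≠ 0) :
    (-1) ^ n * ∏ j ∈ range n, (1 / 2 - j : ℝ) = -fallHalf n := by
  induction n, Nat.one_le_iff_ne_zero.2 hn using Nat.le_induction with
  | base => norm_num [fallHalf]
  | succ n hn1 ih =>
    have hneg : |1 / 2 - (n : ℝ)| = -(1 / 2 - n) := by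
      rw [abs_of_nonpos]; linarith [(Nat.one_le_cast (α := ℝ)).2 hn1]
    rw [prod_range_succ, fallHalf_succ, hneg]
    linear_combination -(1 / 2 - (n : ℝ)) * ih (by omega)

lemma sum_choose_mul_prod_range_half_sub {n : ℕ} (hn : 2 ≤ n) :
    ∑ k ∈ range (n + 1), (n.choose k : ℝ) *
      ((∏ j ∈ range k, (1 / 2 - j : ℝ)) * ∏ j ∈ range (n - k), (1 / 2 - j : ℝ)) = 0 := by
  have h := Ring.descPochhammer_smeval_add (r := (1 / 2 : ℝ)) (s := 1 / 2) n (Commute.all _ _)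
  simp only [descPochhammer_int_smeval_eq_prod_range] at h
  rw [← Nat.sum_antidiagonal_eq_sum_range_succ fun i j => (n.choose i : ℝ) *
    ((∏ j ∈ range i, (1 / 2 - j : ℝ)) * ∏ l ∈ range j, (1 / 2 - l : ℝ)), ← h]
  exact prod_eq_zero (i := 1) (mem_range.2 (by omega)) (by norm_num)

lemma sum_Ioo_choose_mul_fallHalf {n : ℕ} (hn : 2 ≤ n) :
    ∑ k ∈ Ioo 0 n, (n.choose k : ℝ) * fallHalf k * fallHalf (n - k) = 2 * fallHalf n := by
  set P : ℕ → ℝ := fun k => ∏ j ∈ range k, (1 / 2 - j : ℝ)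
  have split_sign (k : ℕ) (hk : k ≤ n) :
      (-1) ^ n * ((n.choose k : ℝ) * (P k * P (n - k)))
        = n.choose k * (((-1) ^ k * P k) * ((-1) ^ (n - k) * P (n - k))) := by
    obtain ⟨l, rfl⟩ := Nat.exists_eq_add_of_le hk
    rw [Nat.add_sub_cancel_left, pow_add]
    ring
  have sign_mul_P (k : ℕ) (hk : k ≠ 0) : (-1) ^ k * P k = -fallHalf k :=
    neg_one_pow_mul_prod_range_half_sub hk
  have hsum : ∑ k ∈ range (n + 1),
      (n.choose k : ℝ) * (((-1) ^ k * P k) * ((-1) ^ (n - k) * P (n - k))) = 0 := by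
    rw [← sum_congr rfl fun k hk => split_sign k (Nat.lt_succ_iff.1 (mem_range.1 hk)), ← mul_sum,
      sum_choose_mul_prod_range_half_sub hn, mul_zero]
  have interior : ∑ k ∈ Ioo 0 n,
      (n.choose k : ℝ) * (((-1) ^ k * P k) * ((-1) ^ (n - k) * P (n - k)))
        = ∑ k ∈ Ioo 0 n, (n.choose k : ℝ) * fallHalf k * fallHalf (n - k) :=
    sum_congr rfl fun k hk => by
      obtain ⟨hk0, hkn⟩ := mem_Ioo.1 hk
      rw [sign_mul_P k hk0.ne', sign_mul_P (n - k) (by omega)]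
      ring
  rw [Nat.range_succ_eq_Icc_zero, ← add_sum_Ioc_eq_sum_Icc (Nat.zero_le n),
    ← sum_Ioo_add_eq_sum_Ioc (by omega), interior] at hsum
  simp only [Nat.choose_zero_right, Nat.choose_self, Nat.sub_zero, Nat.sub_self, pow_zero,
    sign_mul_P n (by omega), show P 0 = 1 from prod_range_zero _, Nat.cast_one] at hsum
  linarith

lemma morder_eq_degree (ν : ℕ →₀ ℕ) : morder ν = ν.degree := rfl

lemma morder_eq_sum_of_support_subset {m : ℕ →₀ ℕ} {s : Finset ℕ} (h : m.support ⊆ s) :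
    morder m = ∑ j ∈ s, m j :=
  Finsupp.sum_of_support_subset m h _ fun _ _ => rfl

lemma morder_add (m ν : ℕ →₀ ℕ) : morder (m + ν) = morder m + morder ν :=
  map_add Finsupp.degree m ν

lemma morder_tsub {m ν : ℕ →₀ ℕ} (h : m ≤ ν) : morder (ν - m) = morder ν - morder m :=
  eq_tsub_of_add_eq (by rw [← morder_add, tsub_add_cancel_of_le h])

lemma morder_pos {m : ℕ →₀ ℕ} (hm : 0 < m) : 0 < morder m := by
  rw [morder_eq_degree, Nat.pos_iff_ne_zero, Ne, Finsupp.degree_eq_zero_iff]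
  exact hm.ne'

lemma morder_mem_Ioo {m ν : ℕ →₀ ℕ} (hm : m ∈ Ioo 0 ν) : morder m ∈ Ioo 0 (morder ν) := by
  obtain ⟨h0, hν⟩ := mem_Ioo.1 hm
  have := morder_pos (tsub_pos_of_lt hν)
  rw [morder_tsub hν.le] at this
  exact mem_Ioo.2 ⟨morder_pos h0, by omega⟩

lemma mbinom_eq_zero_of_not_le {ν m : ℕ →₀ ℕ} (hs : m.support ⊆ ν.support) (h : ¬m ≤ ν) :
    mbinom ν m = 0 := by
  obtain ⟨j, hj⟩ := not_forall.1 (mt Finsupp.le_def.2 h)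
  have hjm : j ∈ m.support := Finsupp.mem_support_iff.2 (by omega)
  exact prod_eq_zero (hs hjm) (Nat.choose_eq_zero_of_lt (not_le.1 hj))

lemma sum_mbinom_filter_morder_eq {ν : ℕ →₀ ℕ} {k : ℕ} (hk : k ∈ Ioo 0 (morder ν)) :
    ∑ m ∈ (Ioo 0 ν).filter (morder · = k), mbinom ν m = (morder ν).choose k := by
  obtain ⟨hk0, hkν⟩ := mem_Ioo.1 hk
  rw [show morder ν = ∑ j ∈ ν.support, ν j from rfl, ← sum_finsuppAntidiag_prod_choose]
  refine sum_subset (fun m hm => ?_) (fun m hm hmk => ?_)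
  · obtain ⟨hmν, rfl⟩ := mem_filter.1 hm
    have hs := Finsupp.support_mono (mem_Ioo.1 hmν).2.le
    exact mem_finsuppAntidiag.2 ⟨(morder_eq_sum_of_support_subset hs).symm, hs⟩
  · obtain ⟨hdeg, hs⟩ := mem_finsuppAntidiag.1 hm
    rw [← morder_eq_sum_of_support_subset hs] at hdeg
    refine mbinom_eq_zero_of_not_le hs fun hle => hmk (mem_filter.2 ⟨mem_Ioo.2 ⟨?_, ?_⟩, hdeg⟩)
    · exact pos_iff_ne_zero.2 (by rintro rfl; rw [morder_eq_degree, map_zero] at hdeg; omega)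
    · exact lt_of_le_of_ne hle (by rintro rfl; omega)

lemma sum_Ioo_mbinom_mul_mul {R : Type*} [Semiring R] (f g : ℕ → R) (ν : ℕ →₀ ℕ) :
    ∑ m ∈ Ioo 0 ν, (mbinom ν m : R) * f (morder m) * g (morder (ν - m))
      = ∑ k ∈ Ioo 0 (morder ν), ((morder ν).choose k : R) * f k * g (morder ν - k) := by
  rw [← sum_fiberwise_of_maps_to fun m => morder_mem_Ioo]
  refine sum_congr rfl fun k hk => ?_
  calc _ = ∑ m ∈ (Ioo 0 ν).filter (morder · = k), (mbinom ν m : R) * f k * g (morder ν - k) :=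
        sum_congr rfl fun m hm => by
          obtain ⟨hmν, rfl⟩ := mem_filter.1 hm
          rw [morder_tsub (mem_Ioo.1 hmν).2.le]
    _ = _ := by rw [← sum_mul, ← sum_mul, ← Nat.cast_sum, sum_mbinom_filter_morder_eq hk]

/-- Convolution-type bound for the falling factorial of `1/2`:
`Σ_{0 ≠ m < ν} binom(ν,m) [1/2]_{|m|} [1/2]_{|ν-m|} ≤ 2 [1/2]_{|ν|}`. -/
theorem fallHalf_convolution_bound (ν : ℕ →₀ ℕ) :
    ∑ m ∈ Finset.Ioo 0 ν,
        (mbinom ν m : ℝ) * fallHalf (morder m) * fallHalf (morder (ν - m))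
      ≤ 2 * fallHalf (morder ν) := by
  rw [sum_Ioo_mbinom_mul_mul]
  rcases lt_or_ge (morder ν) 2 with hν | hν
  · rw [sum_eq_zero fun k hk => by have := mem_Ioo.1 hk; omega]
    exact mul_nonneg zero_le_two (prod_nonneg fun _ _ => abs_nonneg _)
  · exact (sum_Ioo_choose_mul_fallHalf hν).le
end

section
/- Let λ ∈ (1/2, 1), let ρ > 0, and let β : {1,2,…} → (0,∞) satisfy Σ_{j≥1} β_j^{2λ/(1+λ)} < ∞. Set b := 2·ζ(2λ)/(2π²)^λ, where ζ(x) := Σ_{n≥1} n^{−x}, and for every finite subset u ⊂ {1,2,…} define the weight γ_u := ( [1/2]_{|u|} · ∏_{j∈u} ( ρβ_j / √b ) )^{2/(1+λ)}. Then sup_{s≥1} ( Σ_{∅≠u⊆{1,…,s}} γ_u^λ · b^{|u|} )^{1/(2λ)} · ( Σ_{u⊆{1,…,s}} [1/2]_{|u|}² · ( ∏_{j∈u} (ρβ_j)² ) / γ_u )^{1/2} < ∞, i.e., this quantity is bounded independently of the truncation dimension s. -/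
/-- The Riemann zeta function on reals, `ζ(x) = Σ_{n≥1} n^{−x}`. -/
noncomputable def zetaReal (x : ℝ) : ℝ := ∑' n : ℕ, ((n : ℝ) + 1) ^ (-x)

/-! Both summands equal `T_u = [1/2]_{|u|}^p ∏_{j∈u} c_j`, where `p = 2λ/(1+λ)` and
`c_j = (ρβ_j)^p b^{1-p/2}`: the weights `γ_u` are chosen exactly so that the two factors balance.
Since `[1/2]_n ≤ n!` and, by the multinomial theorem, the `n`-th elementary symmetric sum of the
`c_j` is at most `(∑_j c_j)^n / n!`, the sum of all `T_u` is at most `∑_n (n!)^{p-1} C^n` with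
`C = ∑_{j≥1} c_j < ∞`; this series converges because `p < 1`. -/

open Finset Filter Topology

lemma fallHalf_pos (n : ℕ) : 0 < fallHalf n :=
  prod_pos fun i _ => abs_pos.mpr <| sub_ne_zero.mpr fun h => by
    rcases i with _ | k
    · norm_num at h
    · push_cast at h; linarith [(k.cast_nonneg : (0 : ℝ) ≤ k)]

lemma fallHalf_le_factorial (n : ℕ) : fallHalf n ≤ n.factorial := by
  rw [← prod_range_add_one_eq_factorial, Nat.cast_prod]
  refine prod_le_prod (fun i _ => abs_nonneg _) fun i _ => abs_le.mpr ⟨?_, ?_⟩ <;>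
    push_cast <;> linarith [(i.cast_nonneg : (0 : ℝ) ≤ i)]

lemma summable_factorial_rpow_mul_pow {p : ℝ} (hp : p < 1) (C : ℝ) :
    Summable fun n : ℕ => (n.factorial : ℝ) ^ (p - 1) * C ^ n := by
  have hlim : Tendsto (fun n : ℕ => ((n : ℝ) + 1) ^ (p - 1) * C) atTop (𝓝 0) := by
    have := (tendsto_rpow_neg_atTop (y := 1 - p) (by linarith)).comp
      (tendsto_atTop_add_const_right _ 1 tendsto_natCast_atTop_atTop)
    simpa [neg_sub] using this.mul_const C
  refine summable_of_ratio_norm_eventually_le (r := 1 / 2) (by norm_num) ?_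
  filter_upwards [(hlim.norm.eventually (ge_mem_nhds (by norm_num : ‖(0 : ℝ)‖ < 1 / 2)))]
    with n hn
  have hrec : ((n + 1).factorial : ℝ) ^ (p - 1) * C ^ (n + 1)
      = (((n : ℝ) + 1) ^ (p - 1) * C) * ((n.factorial : ℝ) ^ (p - 1) * C ^ n) := by
    rw [Nat.factorial_succ, Nat.cast_mul, Real.mul_rpow (by positivity) (by positivity)]
    push_cast; ring
  rw [hrec, norm_mul]
  exact mul_le_mul_of_nonneg_right hn (norm_nonneg _)

lemma zetaReal_pos {x : ℝ} (hx : 1 < x) : 0 < zetaReal x := by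
  have hsum : Summable fun n : ℕ => ((n : ℝ) + 1) ^ (-x) := by
    refine ((Real.summable_one_div_nat_add_rpow 1 x).mpr hx).congr fun n => ?_
    rw [abs_of_pos (by positivity), one_div, Real.rpow_neg (by positivity)]
  exact hsum.tsum_pos (fun n => by positivity) 0 (by positivity)

lemma Finset.factorial_mul_sum_powersetCard_prod_le {α R : Type*}
    [CommSemiring R] [PartialOrder R] [IsOrderedRing R] {s : Finset α} {c : α → R}
    (hc : ∀ i ∈ s, 0 ≤ c i) (n : ℕ) :
    (n.factorial : R) * ∑ u ∈ s.powersetCard n, ∏ i ∈ u, c i ≤ (∑ i ∈ s, c i) ^ n := by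
  classical
  -- In the multinomial expansion of `(∑ c)^n`, each `n`-subset `u` appears as the exponent
  -- vector `ind u` (its indicator), whose multinomial coefficient is `n!`.
  set ind : Finset α → α → ℕ := fun u i => if i ∈ u then 1 else 0
  have hsum_ind : ∀ u ∈ s.powersetCard n, ∑ i ∈ s, ind u i = n := by
    intro u hu
    obtain ⟨hus, rfl⟩ := mem_powersetCard.mp hu
    simp [ind, inter_eq_right.mpr hus]
  have hterm : ∀ u ∈ s.powersetCard n,
      (Nat.multinomial s (ind u) : R) * ∏ i ∈ s, c i ^ ind u i = n.factorial * ∏ i ∈ u, c i := by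
    intro u hu
    have hmult : Nat.multinomial s (ind u) = n.factorial := by
      have := Nat.multinomial_spec s (ind u)
      rwa [prod_eq_one (fun i _ => by simp only [ind]; split_ifs <;> rfl), one_mul,
        hsum_ind u hu] at this
    have hprod : ∏ i ∈ s, c i ^ ind u i = ∏ i ∈ u, c i := by
      simp only [ind, pow_ite, pow_one, pow_zero]
      rw [prod_ite_mem, inter_eq_right.mpr (mem_powersetCard.mp hu).1]
    rw [hmult, hprod]
  have hinj : Set.InjOn ind (s.powersetCard n) := fun u _ v _ h => by
    ext i
    have hi := congrFun h i
    simp only [ind] at hi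
    split_ifs at hi <;> tauto
  have hsub : (s.powersetCard n).image ind ⊆ s.piAntidiag n := by
    intro k hk
    obtain ⟨u, hu, rfl⟩ := mem_image.mp hk
    refine mem_piAntidiag.mpr ⟨hsum_ind u hu, fun i hi => ?_⟩
    exact (mem_powersetCard.mp hu).1 (by simpa [ind] using hi)
  calc (n.factorial : R) * ∑ u ∈ s.powersetCard n, ∏ i ∈ u, c i
      = ∑ k ∈ (s.powersetCard n).image ind, (Nat.multinomial s k : R) * ∏ i ∈ s, c i ^ k i := by
        rw [sum_image hinj, mul_sum]; exact (sum_congr rfl hterm).symm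
    _ ≤ ∑ k ∈ s.piAntidiag n, (Nat.multinomial s k : R) * ∏ i ∈ s, c i ^ k i :=
        sum_le_sum_of_subset_of_nonneg hsub fun k _ _ =>
          mul_nonneg (Nat.cast_nonneg _) (prod_nonneg fun i hi => pow_nonneg (hc i hi) _)
    _ = (∑ i ∈ s, c i) ^ n := (sum_pow_eq_sum_piAntidiag s c n).symm

lemma sum_powerset_fallHalf_rpow_mul_prod_le {α : Type*} {s : Finset α} {c : α → ℝ}
    {p C : ℝ} (hp0 : 0 ≤ p) (hp1 : p < 1) (hc : ∀ i ∈ s, 0 ≤ c i)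
    (hC : ∑ i ∈ s, c i ≤ C) :
    ∑ u ∈ s.powerset, fallHalf #u ^ p * ∏ i ∈ u, c i
      ≤ ∑' n : ℕ, (n.factorial : ℝ) ^ (p - 1) * C ^ n := by
  have hC0 : 0 ≤ C := (sum_nonneg hc).trans hC
  rw [sum_powerset]
  refine (sum_le_sum fun n _ => ?_).trans <| (summable_factorial_rpow_mul_pow hp1 C).sum_le_tsum _
    fun n _ => by positivity
  have hfac : (0 : ℝ) < n.factorial := by positivity
  have hesymm : ∑ u ∈ s.powersetCard n, ∏ i ∈ u, c i ≤ C ^ n / n.factorial := by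
    rw [le_div_iff₀' hfac]
    exact (factorial_mul_sum_powersetCard_prod_le hc n).trans
      (pow_le_pow_left₀ (sum_nonneg hc) hC n)
  calc ∑ u ∈ s.powersetCard n, fallHalf #u ^ p * ∏ i ∈ u, c i
      = fallHalf n ^ p * ∑ u ∈ s.powersetCard n, ∏ i ∈ u, c i := by
        rw [mul_sum]
        exact sum_congr rfl fun u hu => by rw [(mem_powersetCard.mp hu).2]
    _ ≤ (n.factorial : ℝ) ^ p * (C ^ n / n.factorial) := by
        gcongr
        · exact sum_nonneg fun u hu => prod_nonneg fun i hi => hc i ((mem_powersetCard.mp hu).1 hi)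
        · exact (fallHalf_pos n).le
        · exact fallHalf_le_factorial n
    _ = (n.factorial : ℝ) ^ (p - 1) * C ^ n := by
        rw [Real.rpow_sub_one hfac.ne']; ring

lemma sum_Icc_one_le_tsum_succ {f : ℕ → ℝ} (hf : ∀ j, 0 ≤ f (j + 1))
    (hsum : Summable fun j => f (j + 1)) (s : ℕ) :
    ∑ j ∈ Icc 1 s, f j ≤ ∑' j, f (j + 1) := by
  calc ∑ j ∈ Icc 1 s, f j = ∑ j ∈ range s, f (j + 1) := by
        rw [range_eq_Ico, sum_Ico_add', zero_add, Ico_add_one_right_eq_Icc]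
    _ ≤ ∑' j, f (j + 1) := hsum.sum_le_tsum _ fun j _ => hf j

lemma mul_prod_div_sqrt_rpow_mul_pow_card {α : Type*} (u : Finset α) {F b : ℝ} {a : α → ℝ}
    (hF : 0 ≤ F) (ha : ∀ j ∈ u, 0 ≤ a j) (hb : 0 < b) (p : ℝ) :
    (F * ∏ j ∈ u, a j / √b) ^ p * b ^ #u = F ^ p * ∏ j ∈ u, a j ^ p * b ^ (1 - p / 2) := by
  rw [Real.mul_rpow hF (prod_nonneg fun j hj => by have := ha j hj; positivity),
    ← Real.finsetProd_rpow u _ fun j hj => by have := ha j hj; positivity, mul_assoc,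
    ← prod_const, ← prod_mul_distrib]
  congr 1
  refine prod_congr rfl fun j hj => ?_
  rw [Real.div_rpow (ha j hj) (Real.sqrt_nonneg b), Real.sqrt_eq_rpow, ← Real.rpow_mul hb.le,
    Real.rpow_sub hb, Real.rpow_one]
  field_simp

lemma mul_prod_div_sqrt_sq_mul_pow_card {α : Type*} (u : Finset α) {F b : ℝ} (a : α → ℝ)
    (hb : 0 < b) :
    (F * ∏ j ∈ u, a j / √b) ^ 2 * b ^ #u = F ^ 2 * ∏ j ∈ u, a j ^ 2 := by
  rw [mul_pow, ← prod_pow, mul_assoc, ← prod_const, ← prod_mul_distrib]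
  congr 1
  refine prod_congr rfl fun j _ => ?_
  rw [div_pow, Real.sq_sqrt hb.le]
  field_simp

lemma rpow_mul_pow_card_eq_of_eq_weight {α : Type*} {u : Finset α} {F b l p γ : ℝ}
    {a : α → ℝ} (hF : 0 ≤ F) (ha : ∀ j ∈ u, 0 ≤ a j) (hb : 0 < b) (hp : p = 2 * l / (1 + l))
    (hγ : γ = (F * ∏ j ∈ u, a j / √b) ^ (2 / (1 + l))) :
    γ ^ l * b ^ #u = F ^ p * ∏ j ∈ u, a j ^ p * b ^ (1 - p / 2) := by
  have hX : 0 ≤ F * ∏ j ∈ u, a j / √b := by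
    have := prod_nonneg fun j hj => div_nonneg (ha j hj) (Real.sqrt_nonneg b)
    positivity
  rw [hγ, ← Real.rpow_mul hX, ← mul_prod_div_sqrt_rpow_mul_pow_card u hF ha hb, hp,
    div_mul_eq_mul_div]

lemma sq_mul_prod_sq_div_eq_of_eq_weight {α : Type*} {u : Finset α} {F b l p γ : ℝ}
    {a : α → ℝ} (hF : 0 < F) (ha : ∀ j ∈ u, 0 < a j) (hb : 0 < b) (hl : 1 + l ≠ 0)
    (hp : p = 2 * l / (1 + l)) (hγ : γ = (F * ∏ j ∈ u, a j / √b) ^ (2 / (1 + l))) :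
    F ^ 2 * (∏ j ∈ u, a j ^ 2) / γ = F ^ p * ∏ j ∈ u, a j ^ p * b ^ (1 - p / 2) := by
  have hX : 0 < F * ∏ j ∈ u, a j / √b :=
    mul_pos hF (prod_pos fun j hj => div_pos (ha j hj) (Real.sqrt_pos.mpr hb))
  have hexp : ((2 : ℕ) : ℝ) - 2 / (1 + l) = p := by
    rw [hp]; field_simp; push_cast; ring
  rw [hγ, ← mul_prod_div_sqrt_sq_mul_pow_card u a hb, mul_div_right_comm, ← Real.rpow_natCast,
    ← Real.rpow_sub hX, hexp,
    mul_prod_div_sqrt_rpow_mul_pow_card u hF.le (fun j hj => (ha j hj).le) hb]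

/-- Dimension-independent boundedness of the QMC error constant `C_{s,γ,λ}`
(for randomly shifted lattice rules in the weighted unanchored Sobolev space)
with the product-and-order-dependent weights
`γ_u = ([1/2]_{|u|} ∏_{j∈u} ρβ_j/√b)^{2/(1+λ)}`,
where `b = 2ζ(2λ)/(2π²)^λ` and `Σ_{j≥1} β_j^{2λ/(1+λ)} < ∞`. -/
theorem qmc_constant_bounded (l ρ : ℝ) (hl0 : 1 / 2 < l) (hl1 : l < 1)
    (hρ : 0 < ρ)
    (β : ℕ → ℝ) (hβ : ∀ j : ℕ, 1 ≤ j → 0 < β j)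
    (hsum : Summable fun j : ℕ => β (j + 1) ^ (2 * l / (1 + l)))
    (b : ℝ) (hb : b = 2 * zetaReal (2 * l) / (2 * Real.pi ^ 2) ^ l)
    (γ : Finset ℕ → ℝ)
    (hγ : ∀ u : Finset ℕ,
      γ u = (fallHalf u.card * ∏ j ∈ u, (ρ * β j / Real.sqrt b)) ^ (2 / (1 + l))) :
    ∃ M : ℝ, ∀ s : ℕ, 1 ≤ s →
      (∑ u ∈ (Finset.Icc 1 s).powerset.erase ∅, γ u ^ l * b ^ u.card) ^ (1 / (2 * l)) *
        (∑ u ∈ (Finset.Icc 1 s).powerset,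
            fallHalf u.card ^ 2 * (∏ j ∈ u, (ρ * β j) ^ 2) / γ u) ^ (1 / 2 : ℝ)
        ≤ M := by
  set p := 2 * l / (1 + l)
  have hp0 : 0 ≤ p := by positivity
  have hp1 : p < 1 := by rw [div_lt_one (by linarith)]; linarith
  have hb0 : 0 < b := hb ▸ div_pos (mul_pos two_pos (zetaReal_pos (by linarith))) (by positivity)
  set c : ℕ → ℝ := fun j => (ρ * β j) ^ p * b ^ (1 - p / 2)
  have hc : ∀ j, 1 ≤ j → 0 ≤ c j := fun j hj => by have := hβ j hj; positivity
  have hcsum : Summable fun j => c (j + 1) :=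
    (hsum.mul_left (ρ ^ p * b ^ (1 - p / 2))).congr fun j => by
      simp only [c]; rw [Real.mul_rpow hρ.le (hβ (j + 1) (Nat.le_add_left 1 j)).le]; ring
  set T : Finset ℕ → ℝ := fun u => fallHalf #u ^ p * ∏ j ∈ u, c j
  set K := ∑' n : ℕ, (n.factorial : ℝ) ^ (p - 1) * (∑' j, c (j + 1)) ^ n
  refine ⟨K ^ (1 / (2 * l)) * K ^ (1 / 2 : ℝ), fun s _ => ?_⟩
  have hρβ : ∀ u ∈ (Icc 1 s).powerset, ∀ j ∈ u, 0 < ρ * β j := fun u hu j hj =>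
    mul_pos hρ (hβ j (mem_Icc.mp (mem_powerset.mp hu hj)).1)
  have hfirst : ∀ u ∈ (Icc 1 s).powerset, γ u ^ l * b ^ #u = T u := fun u hu =>
    rpow_mul_pow_card_eq_of_eq_weight (fallHalf_pos _).le (fun j hj => (hρβ u hu j hj).le) hb0
      rfl (hγ u)
  have hsecond : ∀ u ∈ (Icc 1 s).powerset,
      fallHalf #u ^ 2 * (∏ j ∈ u, (ρ * β j) ^ 2) / γ u = T u := fun u hu =>
    sq_mul_prod_sq_div_eq_of_eq_weight (fallHalf_pos _) (hρβ u hu) hb0 (by linarith) rfl (hγ u)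
  have hT0 : ∀ u ∈ (Icc 1 s).powerset, 0 ≤ T u := fun u hu =>
    mul_nonneg (Real.rpow_nonneg (fallHalf_pos _).le _)
      (prod_nonneg fun j hj => by have := hρβ u hu j hj; positivity)
  have hTK : ∑ u ∈ (Icc 1 s).powerset, T u ≤ K :=
    sum_powerset_fallHalf_rpow_mul_prod_le hp0 hp1 (fun j hj => hc j (mem_Icc.mp hj).1)
      (sum_Icc_one_le_tsum_succ (fun j => hc _ (Nat.le_add_left 1 j)) hcsum s)
  have hTK' : ∑ u ∈ (Icc 1 s).powerset.erase ∅, T u ≤ K :=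
    (sum_le_sum_of_subset_of_nonneg (erase_subset _ _) fun u hu _ => hT0 u hu).trans hTK
  have hS₁ := sum_nonneg fun u hu => hT0 u (mem_of_mem_erase (a := ∅) hu)
  have hS₂ := sum_nonneg hT0
  rw [sum_congr rfl fun u hu => hfirst u (mem_of_mem_erase hu), sum_congr rfl hsecond]
  gcongr
  exact Real.rpow_nonneg (hS₂.trans hTK) _
end
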